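/- Let S, A be finite nonempty sets, let f : ℝ^d × S × A → ℝ be differentiable in its first argument, fix θ₀ ∈ ℝ^d, and suppose the policy π satisfies π(a|s) = exp f(θ₀, s, a) for all (s,a). Define the AIRL discriminator D_θ(s,a) = exp f(θ,s,a) / ( exp f(θ,s,a) + π(a|s) ). Then at θ = θ₀: (i) ∇_θ log D_θ(s,a) = (1/2) ∇_θ f(θ₀,s,a) and (ii) ∇_θ log(1 − D_θ(s,a)) = −(1/2) ∇_θ f(θ₀,s,a) for every (s,a). Consequently, for any horizon T_h and any two probability distributions 𝔻 and P_π over sequences ((S_0,A_0),…,(S_{T_h−1},A_{T_h−1})) in (S × A)^{T_h}, the cross-entropy discriminator loss L(θ) = −E_{P_π}[ Σ_{t=0}^{T_h−1} log(1 − D_θ(S_t,A_t)) ] − E_{𝔻}[ Σ_{t=0}^{T_h−1} log D_θ(S_t,A_t) ] satisfies −2 ∇_θ L(θ₀) = E_{𝔻}[ Σ_{t=0}^{T_h−1} ∇_θ f(θ₀,S_t,A_t) ] − E_{P_π}[ Σ_{t=0}^{T_h−1} ∇_θ f(θ₀,S_t,A_t) ]. -/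

import Mathlib

/-!
Write `c = f(θ₀,s,a)`. Since `π(a|s) = eᶜ`, `log D_θ = f(θ,s,a) - log (e^{f(θ,s,a)} + eᶜ)` and
`log (1 - D_θ) = c - log (e^{f(θ,s,a)} + eᶜ)`. At `θ₀` both summands of `e^{f} + eᶜ` equal `eᶜ`,
so the gradient of the shared logarithm is `eᶜ ∇f / (2 eᶜ) = ½ ∇f`, which gives (i) and (ii);
the gradient of the loss then follows by linearity.
-/

section LogisticLogLikelihood

variable {E : Type*} [NormedAddCommGroup E] [NormedSpace ℝ E] {u : E → ℝ} {u' : E →L[ℝ] ℝ}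
  {x : E}

theorem HasFDerivAt.log_exp_add_exp_self (hu : HasFDerivAt u u' x) :
    HasFDerivAt (fun y => Real.log (Real.exp (u y) + Real.exp (u x))) ((1 / 2 : ℝ) • u') x := by
  convert (hu.exp.add_const (Real.exp (u x))).log (by positivity) using 1
  rw [smul_smul]
  congr 1
  field_simp
  ring

theorem HasFDerivAt.log_exp_div_exp_add_exp_self (hu : HasFDerivAt u u' x) :
    HasFDerivAt (fun y => Real.log (Real.exp (u y) / (Real.exp (u y) + Real.exp (u x))))
      ((1 / 2 : ℝ) • u') x := by
  have hlog (y : E) : Real.log (Real.exp (u y) / (Real.exp (u y) + Real.exp (u x)))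
      = u y - Real.log (Real.exp (u y) + Real.exp (u x)) := by
    rw [Real.log_div (Real.exp_ne_zero _) (by positivity), Real.log_exp]
  simp only [hlog]
  exact (hu.sub hu.log_exp_add_exp_self).congr_fderiv (by module)

theorem HasFDerivAt.log_one_sub_exp_div_exp_add_exp_self (hu : HasFDerivAt u u' x) :
    HasFDerivAt (fun y => Real.log (1 - Real.exp (u y) / (Real.exp (u y) + Real.exp (u x))))
      (-((1 / 2 : ℝ) • u')) x := by
  have hlog (y : E) : Real.log (1 - Real.exp (u y) / (Real.exp (u y) + Real.exp (u x)))
      = u x - Real.log (Real.exp (u y) + Real.exp (u x)) := by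
    have hpos : 0 < Real.exp (u y) + Real.exp (u x) := by positivity
    rw [one_sub_div hpos.ne', add_sub_cancel_left, Real.log_div (Real.exp_ne_zero _) hpos.ne',
      Real.log_exp]
  simp only [hlog]
  exact ((hasFDerivAt_const (u x) x).sub hu.log_exp_add_exp_self).congr_fderiv (by simp)

end LogisticLogLikelihood

section Gradient

variable {F : Type*} [NormedAddCommGroup F] [InnerProductSpace ℝ F] [CompleteSpace F]
  {f g : F → ℝ} {f' g' x : F}

theorem HasGradientAt.log_exp_div_exp_add_exp_self (hf : HasGradientAt f f' x) :
    HasGradientAt (fun y => Real.log (Real.exp (f y) / (Real.exp (f y) + Real.exp (f x))))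
      ((1 / 2 : ℝ) • f') x := by
  rw [hasGradientAt_iff_hasFDerivAt, map_smul]
  exact HasFDerivAt.log_exp_div_exp_add_exp_self hf

theorem HasGradientAt.log_one_sub_exp_div_exp_add_exp_self (hf : HasGradientAt f f' x) :
    HasGradientAt (fun y => Real.log (1 - Real.exp (f y) / (Real.exp (f y) + Real.exp (f x))))
      (-((1 / 2 : ℝ) • f')) x := by
  rw [hasGradientAt_iff_hasFDerivAt, map_neg, map_smul]
  exact HasFDerivAt.log_one_sub_exp_div_exp_add_exp_self hf

theorem HasGradientAt.neg (hf : HasGradientAt f f' x) : HasGradientAt (fun y => -f y) (-f') x := by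
  rw [hasGradientAt_iff_hasFDerivAt, map_neg]
  exact HasFDerivAt.neg hf

theorem HasGradientAt.sub (hf : HasGradientAt f f' x) (hg : HasGradientAt g g' x) :
    HasGradientAt (fun y => f y - g y) (f' - g') x := by
  rw [hasGradientAt_iff_hasFDerivAt, map_sub]
  exact HasFDerivAt.sub hf hg

theorem HasGradientAt.const_mul (hf : HasGradientAt f f' x) (c : ℝ) :
    HasGradientAt (fun y => c * f y) (c • f') x := by
  rw [hasGradientAt_iff_hasFDerivAt, map_smul]
  exact HasFDerivAt.const_mul hf c

theorem HasGradientAt.fun_sum {ι : Type*} {s : Finset ι} {φ : ι → F → ℝ} {φ' : ι → F}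
    (h : ∀ i ∈ s, HasGradientAt (φ i) (φ' i) x) :
    HasGradientAt (fun y => ∑ i ∈ s, φ i y) (∑ i ∈ s, φ' i) x := by
  rw [hasGradientAt_iff_hasFDerivAt, map_sum]
  exact HasFDerivAt.fun_sum h

end Gradient

theorem stmt9_general {S A : Type*} [Fintype S] [Fintype A] {d : ℕ}
    (f : EuclideanSpace ℝ (Fin d) → S → A → ℝ)
    (hf : ∀ s a, Differentiable ℝ (fun θ => f θ s a))
    (θ₀ : EuclideanSpace ℝ (Fin d))
    -- the generator policy equals `exp f(θ₀, ·, ·)`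
    (π : S → A → ℝ) (hπ : ∀ s a, π s a = Real.exp (f θ₀ s a))
    -- the AIRL discriminator
    (D : EuclideanSpace ℝ (Fin d) → S → A → ℝ)
    (hD : ∀ θ s a, D θ s a = Real.exp (f θ s a) / (Real.exp (f θ s a) + π s a))
    -- horizon and two distributions over length-`Th` sequences of state-action pairs:
    -- `Dd` (demonstrator) and `Pp` (generator)
    (Th : ℕ)
    (Dd Pp : (Fin Th → S × A) → ℝ) :
    -- (i)
    (∀ s a, HasGradientAt (fun θ => Real.log (D θ s a))
        ((1 / 2 : ℝ) • gradient (fun θ => f θ s a) θ₀) θ₀) ∧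
    -- (ii)
    (∀ s a, HasGradientAt (fun θ => Real.log (1 - D θ s a))
        (-((1 / 2 : ℝ) • gradient (fun θ => f θ s a) θ₀)) θ₀) ∧
    -- consequently, the discriminator loss `L` has gradient at `θ₀` equal to
    -- `−½ (E_𝔻[∑_t ∇f] − E_{P_π}[∑_t ∇f])`, i.e. `−2∇L(θ₀) = E_𝔻[∑_t ∇f] − E_{P_π}[∑_t ∇f]`
    HasGradientAt
      (fun θ =>
        -(∑ τ : Fin Th → S × A, Pp τ * ∑ t, Real.log (1 - D θ (τ t).1 (τ t).2))
          - ∑ τ : Fin Th → S × A, Dd τ * ∑ t, Real.log (D θ (τ t).1 (τ t).2))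
      ((-(1 / 2) : ℝ) •
        ((∑ τ : Fin Th → S × A, Dd τ • ∑ t, gradient (fun θ => f θ (τ t).1 (τ t).2) θ₀)
          - ∑ τ : Fin Th → S × A, Pp τ • ∑ t, gradient (fun θ => f θ (τ t).1 (τ t).2) θ₀))
      θ₀ := by
  have hgrad (s : S) (a : A) :
      HasGradientAt (fun θ => f θ s a) (gradient (fun θ => f θ s a) θ₀) θ₀ :=
    (hf s a θ₀).hasGradientAt
  have hlogD (s : S) (a : A) : HasGradientAt (fun θ => Real.log (D θ s a))
      ((1 / 2 : ℝ) • gradient (fun θ => f θ s a) θ₀) θ₀ := by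
    simpa only [hD, hπ] using (hgrad s a).log_exp_div_exp_add_exp_self
  have hlog1mD (s : S) (a : A) : HasGradientAt (fun θ => Real.log (1 - D θ s a))
      (-((1 / 2 : ℝ) • gradient (fun θ => f θ s a) θ₀)) θ₀ := by
    simpa only [hD, hπ] using (hgrad s a).log_one_sub_exp_div_exp_add_exp_self
  refine ⟨hlogD, hlog1mD, ?_⟩
  convert ((HasGradientAt.fun_sum fun τ _ => (HasGradientAt.fun_sum fun t _ =>
      hlog1mD (τ t).1 (τ t).2).const_mul (Pp τ)).neg.sub
    (HasGradientAt.fun_sum fun τ _ => (HasGradientAt.fun_sum fun t _ =>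
      hlogD (τ t).1 (τ t).2).const_mul (Dd τ))) using 1
  simp only [Finset.sum_neg_distrib, ← Finset.smul_sum, smul_neg, smul_comm (Pp _),
    smul_comm (Dd _)]
  module

theorem stmt9 {S A : Type*} [Fintype S] [Fintype A] [Nonempty S] [Nonempty A] {d : ℕ}
    (f : EuclideanSpace ℝ (Fin d) → S → A → ℝ)
    (hf : ∀ s a, Differentiable ℝ (fun θ => f θ s a))
    (θ₀ : EuclideanSpace ℝ (Fin d))
    -- the generator policy equals `exp f(θ₀, ·, ·)`
    (π : S → A → ℝ) (hπ : ∀ s a, π s a = Real.exp (f θ₀ s a))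
    -- the AIRL discriminator
    (D : EuclideanSpace ℝ (Fin d) → S → A → ℝ)
    (hD : ∀ θ s a, D θ s a = Real.exp (f θ s a) / (Real.exp (f θ s a) + π s a))
    -- horizon and two distributions over length-`Th` sequences of state-action pairs:
    -- `Dd` (demonstrator) and `Pp` (generator)
    (Th : ℕ)
    (Dd Pp : (Fin Th → S × A) → ℝ)
    (hDd0 : ∀ τ, 0 ≤ Dd τ) (hDd1 : ∑ τ, Dd τ = 1)
    (hPp0 : ∀ τ, 0 ≤ Pp τ) (hPp1 : ∑ τ, Pp τ = 1) :
    -- (i)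
    (∀ s a, HasGradientAt (fun θ => Real.log (D θ s a))
        ((1 / 2 : ℝ) • gradient (fun θ => f θ s a) θ₀) θ₀) ∧
    -- (ii)
    (∀ s a, HasGradientAt (fun θ => Real.log (1 - D θ s a))
        (-((1 / 2 : ℝ) • gradient (fun θ => f θ s a) θ₀)) θ₀) ∧
    -- consequently, the discriminator loss `L` has gradient at `θ₀` equal to
    -- `−½ (E_𝔻[∑_t ∇f] − E_{P_π}[∑_t ∇f])`, i.e. `−2∇L(θ₀) = E_𝔻[∑_t ∇f] − E_{P_π}[∑_t ∇f]`
    HasGradientAt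
      (fun θ =>
        -(∑ τ : Fin Th → S × A, Pp τ * ∑ t, Real.log (1 - D θ (τ t).1 (τ t).2))
          - ∑ τ : Fin Th → S × A, Dd τ * ∑ t, Real.log (D θ (τ t).1 (τ t).2))
      ((-(1 / 2) : ℝ) •
        ((∑ τ : Fin Th → S × A, Dd τ • ∑ t, gradient (fun θ => f θ (τ t).1 (τ t).2) θ₀)
          - ∑ τ : Fin Th → S × A, Pp τ • ∑ t, gradient (fun θ => f θ (τ t).1 (τ t).2) θ₀))
      θ₀ :=
  stmt9_general f hf θ₀ π hπ D hD Th Dd Pp
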